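/- Let L be a real-valued function on an interval, and for t ≥ 0 define S_t = sup_{0 ≤ s ≤ t} L_s. Let x₁ < x₂ and s₁ ∈ [x₁-ε, x₁], s₂ ∈ [x₂-ε, x₂] with 0 ≤ s₁ ≤ s₂. Then the condition inf_{r ∈ [s₁,s₂]} (2S_r - L_r) = 2S_{s₁} - L_{s₁} = 2S_{s₂} - L_{s₂} holds if and only if sup_{r ∈ [s₁,s₂]} L_r = L_{s₁} = L_{s₂}. -/
import Mathlib


/-- For a continuous function `L` on `[0,∞)` with running maximum
`S t = sup_{s ∈ [0,t]} L s`, and `s₁ ≤ s₂` as specified, the process `2S - L` attains its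
infimum over `[s₁,s₂]` at both endpoints with equal values iff `L` attains its supremum
over `[s₁,s₂]` at both endpoints with equal values. -/
theorem stmt_0 (L : ℝ → ℝ) (hL : ContinuousOn L (Set.Ici 0))
    (S : ℝ → ℝ) (hS : ∀ t, 0 ≤ t → S t = sSup (L '' Set.Icc 0 t))
    (ε x₁ x₂ s₁ s₂ : ℝ) (hε : 0 < ε) (hx : x₁ < x₂)
    (hs₁ : s₁ ∈ Set.Icc (x₁ - ε) x₁) (hs₂ : s₂ ∈ Set.Icc (x₂ - ε) x₂)
    (h0 : 0 ≤ s₁) (h12 : s₁ ≤ s₂) :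
    (sInf ((fun r => 2 * S r - L r) '' Set.Icc s₁ s₂) = 2 * S s₁ - L s₁ ∧
        2 * S s₁ - L s₁ = 2 * S s₂ - L s₂) ↔
      (sSup (L '' Set.Icc s₁ s₂) = L s₁ ∧ L s₁ = L s₂) := by
  have hsub : ∀ a b : ℝ, 0 ≤ a → Set.Icc a b ⊆ Set.Ici 0 := fun a b ha x hx => ha.trans hx.1
  have hbdd : ∀ a b : ℝ, 0 ≤ a → BddAbove (L '' Set.Icc a b) := fun a b ha =>
    (isCompact_Icc.image_of_continuousOn (hL.mono (hsub a b ha))).bddAbove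
  have hSL : ∀ t : ℝ, 0 ≤ t → L t ≤ S t := by
    intro t ht
    rw [hS t ht]
    exact le_csSup (hbdd 0 t le_rfl) ⟨t, ⟨ht, le_rfl⟩, rfl⟩
  have hSsplit : ∀ a b : ℝ, 0 ≤ a → a ≤ b → S b = max (S a) (sSup (L '' Set.Icc a b)) := by
    intro a b ha hab
    rw [hS b (ha.trans hab), hS a ha, ← Set.Icc_union_Icc_eq_Icc ha hab, Set.image_union,
      csSup_union (hbdd 0 a le_rfl) ((Set.nonempty_Icc.mpr ha).image L)
        (hbdd a b ha) ((Set.nonempty_Icc.mpr hab).image L)]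
  have hSmono : ∀ a b : ℝ, 0 ≤ a → a ≤ b → S a ≤ S b := by
    intro a b ha hab
    rw [hSsplit a b ha hab]; exact le_max_left _ _
  constructor
  · rintro ⟨hinf, heq2⟩
    have hsupb : ∀ r ∈ Set.Icc s₁ s₂, L r ≤ sSup (L '' Set.Icc s₁ s₂) :=
      fun r hr => le_csSup (hbdd s₁ s₂ h0) ⟨r, hr, rfl⟩
    have hbb : BddBelow ((fun r => 2 * S r - L r) '' Set.Icc s₁ s₂) := by
      refine ⟨2 * S s₁ - sSup (L '' Set.Icc s₁ s₂), ?_⟩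
      rintro y ⟨r, hr, rfl⟩
      have h1 := hSmono s₁ r h0 hr.1
      have h2 := hsupb r hr
      simp only
      linarith
    have hlow : ∀ r ∈ Set.Icc s₁ s₂, 2 * S s₂ - L s₂ ≤ 2 * S r - L r := by
      intro r hr
      rw [← heq2, ← hinf]
      exact csInf_le hbb ⟨r, hr, rfl⟩
    have hLr : ∀ r ∈ Set.Icc s₁ s₂, L r ≤ L s₂ := by
      intro r hr
      have h1 := hlow r hr
      have h2 := hSmono r s₂ (h0.trans hr.1) hr.2
      linarith
    have hself₁ : L s₁ ≤ L s₂ := hLr s₁ ⟨le_rfl, h12⟩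
    have hsupeq : sSup (L '' Set.Icc s₁ s₂) = L s₂ :=
      le_antisymm
        (csSup_le ((Set.nonempty_Icc.mpr h12).image L)
          (by rintro y ⟨r, hr, rfl⟩; exact hLr r hr))
        (le_csSup (hbdd s₁ s₂ h0) ⟨s₂, ⟨h12, le_rfl⟩, rfl⟩)
    have hS2 : S s₂ = max (S s₁) (L s₂) := by rw [hSsplit s₁ s₂ h0 h12, hsupeq]
    have heqL : L s₁ = L s₂ := by
      by_contra hne
      have hlt : L s₁ < L s₂ := lt_of_le_of_ne hself₁ hne
      have hSlt : S s₁ < S s₂ := by linarith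
      have hS1lt : S s₁ < L s₂ := by
        by_contra h
        push_neg at h
        rw [hS2, max_eq_left h] at hSlt
        exact lt_irrefl _ hSlt
      have hS2eq : S s₂ = L s₂ := by rw [hS2, max_eq_right hS1lt.le]
      set c := (S s₁ + L s₂) / 2 with hc
      have hc1 : S s₁ < c := by rw [hc]; linarith
      have hc2 : c < L s₂ := by rw [hc]; linarith
      have hLs1c : L s₁ < c := lt_of_le_of_lt (hSL s₁ h0) hc1
      have hivt : ∀ b ∈ Set.Icc s₁ s₂, c ≤ L b → ∃ y ∈ Set.Icc s₁ b, L y = c := by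
        intro b hb hcb
        have hmem : c ∈ Set.Icc (L s₁) (L b) := ⟨hLs1c.le, hcb⟩
        have := intermediate_value_Icc hb.1
          (hL.mono ((Set.Icc_subset_Icc_right hb.2).trans (hsub s₁ s₂ h0)))
        obtain ⟨y, hy, hLy⟩ := this hmem
        exact ⟨y, hy, hLy⟩
      have hTne : {x ∈ Set.Icc s₁ s₂ | L x = c}.Nonempty := by
        obtain ⟨y, hy, hLy⟩ := hivt s₂ ⟨h12, le_rfl⟩ hc2.le
        exact ⟨y, hy, hLy⟩
      have hTbb : BddBelow {x ∈ Set.Icc s₁ s₂ | L x = c} := ⟨s₁, fun x hx => hx.1.1⟩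
      have hTclosed : IsClosed {x ∈ Set.Icc s₁ s₂ | L x = c} := by
        have heqset : {x ∈ Set.Icc s₁ s₂ | L x = c} = Set.Icc s₁ s₂ ∩ L ⁻¹' {c} := by
          ext x; simp [Set.mem_sep_iff]
        rw [heqset]
        exact ContinuousOn.preimage_isClosed_of_isClosed
          (hL.mono (hsub s₁ s₂ h0)) isClosed_Icc isClosed_singleton
      set r := sInf {x ∈ Set.Icc s₁ s₂ | L x = c} with hr
      have hrT : r ∈ {x ∈ Set.Icc s₁ s₂ | L x = c} := hTclosed.csInf_mem hTne hTbb
      have hrIcc : r ∈ Set.Icc s₁ s₂ := hrT.1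
      have hLrc : L r = c := hrT.2
      have hle_c : ∀ x ∈ Set.Icc s₁ r, L x ≤ c := by
        intro x hx
        by_contra h
        push_neg at h
        obtain ⟨y, hy, hLy⟩ := hivt x ⟨hx.1, hx.2.trans hrIcc.2⟩ h.le
        have hry : r ≤ y := csInf_le hTbb ⟨⟨hy.1, hy.2.trans (hx.2.trans hrIcc.2)⟩, hLy⟩
        have hxy : x = y := le_antisymm (hx.2.trans hry) hy.2
        rw [hxy, hLy] at h
        exact lt_irrefl _ h
      have hsupr : sSup (L '' Set.Icc s₁ r) = c :=
        le_antisymm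
          (csSup_le ((Set.nonempty_Icc.mpr hrIcc.1).image L)
            (by rintro y ⟨x, hx, rfl⟩; exact hle_c x hx))
          (hLrc ▸ le_csSup (hbdd s₁ r h0) ⟨r, ⟨hrIcc.1, le_rfl⟩, rfl⟩)
      have hSr : S r = c := by
        rw [hSsplit s₁ r h0 hrIcc.1, hsupr, max_eq_right hc1.le]
      have hlr := hlow r hrIcc
      rw [hSr, hLrc, hS2eq] at hlr
      linarith
    exact ⟨by rw [hsupeq, heqL], heqL⟩
  · rintro ⟨hsup, heq⟩
    have hub : ∀ r ∈ Set.Icc s₁ s₂, L r ≤ L s₁ :=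
      fun r hr => hsup ▸ le_csSup (hbdd s₁ s₂ h0) ⟨r, hr, rfl⟩
    have hSr : ∀ r ∈ Set.Icc s₁ s₂, S r = S s₁ := by
      intro r hr
      rw [hSsplit s₁ r h0 hr.1]
      have hle : sSup (L '' Set.Icc s₁ r) ≤ S s₁ :=
        csSup_le ((Set.nonempty_Icc.mpr hr.1).image L)
          (by rintro y ⟨x, hx, rfl⟩
              exact (hub x ⟨hx.1, hx.2.trans hr.2⟩).trans (hSL s₁ h0))
      exact max_eq_left hle
    have hmem : 2 * S s₁ - L s₁ ∈ (fun r => 2 * S r - L r) '' Set.Icc s₁ s₂ :=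
      ⟨s₁, ⟨le_rfl, h12⟩, rfl⟩
    have hlb : ∀ y ∈ (fun r => 2 * S r - L r) '' Set.Icc s₁ s₂, 2 * S s₁ - L s₁ ≤ y := by
      rintro y ⟨r, hr, rfl⟩
      simp only
      rw [hSr r hr]
      have := hub r hr
      linarith
    constructor
    · exact le_antisymm (csInf_le ⟨_, hlb⟩ hmem) (le_csInf ⟨_, hmem⟩ hlb)
    · rw [hSr s₂ ⟨h12, le_rfl⟩, heq]
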